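/- arXiv:1003.1058 — 3 statements merged into one kernel-verified Lean document; each statement's English description precedes it below -/
import Mathlib

section
/- Let V be a type and p₀ : V, and let E : V → V → Prop be the star relation with center p₀, i.e., E p q ↔ (p = p₀ ∧ q ≠ p₀). Let X ⊆ V be a nonempty set such that there is no edge (y, x) with y ∈ Xᶜ and x ∈ X. Then p₀ ∈ X, and the subgraph induced by X is again a star with center p₀: for all p, q ∈ X, (p ∈ X ∧ q ∈ X ∧ E p q) ↔ (p = p₀ ∧ q ∈ X ∧ q ≠ p₀). -/
/-- The system of star graphs is dicut-closed: if `E` is the star relation with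
center `p₀` and `X` is a nonempty set with no edge from `Xᶜ` into `X`, then
`p₀ ∈ X` and the subgraph induced by `X` is again a star with center `p₀`. -/
theorem star_dicut_closed {V : Type*} (E : V → V → Prop) (p₀ : V)
    (hstar : ∀ p q : V, E p q ↔ (p = p₀ ∧ q ≠ p₀))
    (X : Set V) (hX : X.Nonempty)
    (hdicut : ¬ ∃ y x, y ∈ Xᶜ ∧ x ∈ X ∧ E y x) :
    p₀ ∈ X ∧
    ∀ p ∈ X, ∀ q ∈ X, ((p ∈ X ∧ q ∈ X ∧ E p q) ↔ (p = p₀ ∧ q ∈ X ∧ q ≠ p₀)) := by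
  obtain ⟨x, hx⟩ := hX
  have hp0 : p₀ ∈ X := by
    by_cases h : x = p₀
    · exact h ▸ hx
    · by_contra hp
      exact hdicut ⟨p₀, x, hp, hx, (hstar p₀ x).mpr ⟨rfl, h⟩⟩
  refine ⟨hp0, fun p hp q hq => ?_⟩
  constructor
  · rintro ⟨-, -, hE⟩
    obtain ⟨h1, h2⟩ := (hstar p q).mp hE
    exact ⟨h1, hq, h2⟩
  · rintro ⟨h1, -, h2⟩
    exact ⟨hp, hq, (hstar p q).mpr ⟨h1, h2⟩⟩
end

section
/- Let V be a finite type with decidable edge relation E : V → V → Prop that is a rooted directed tree with root p₀: every node is reachable from p₀ (Relation.ReflTransGen E p₀ q for all q) and Fintype.card {e : V × V // E e.1 e.2} = Fintype.card V − 1. Let X ⊆ V be a nonempty (decidable) set such that there is no edge (y, x) with y ∈ Xᶜ and x ∈ X. Then p₀ ∈ X and the subgraph induced by X is a rooted directed tree with root p₀: every x ∈ X satisfies Relation.ReflTransGen (fun a b => a ∈ X ∧ b ∈ X ∧ E a b) p₀ x, and the number of edges of the induced subgraph equals the cardinality of X minus 1. -/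
/-- The system of rooted directed trees is dicut-closed: the subgraph induced
by a dicut set `X` of a rooted directed tree with root `p₀` is again a rooted
directed tree with root `p₀`. -/
theorem tree_dicut_closed {V : Type*} [Fintype V] [DecidableEq V]
    (E : V → V → Prop) [DecidableRel E] (p₀ : V)
    (hroot : ∀ q : V, Relation.ReflTransGen E p₀ q)
    (hcard : Fintype.card {e : V × V // E e.1 e.2} = Fintype.card V - 1)
    (X : Set V) [DecidablePred (· ∈ X)] (hX : X.Nonempty)
    (hdicut : ¬ ∃ y x, y ∈ Xᶜ ∧ x ∈ X ∧ E y x) :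
    p₀ ∈ X ∧
    (∀ x ∈ X, Relation.ReflTransGen (fun a b => a ∈ X ∧ b ∈ X ∧ E a b) p₀ x) ∧
    Fintype.card {e : V × V // e.1 ∈ X ∧ e.2 ∈ X ∧ E e.1 e.2} = Fintype.card X - 1 := by
  classical
  have hstep : ∀ {a b : V}, E a b → b ∈ X → a ∈ X := by
    intro a b hE hb
    by_contra ha
    exact hdicut ⟨a, b, ha, hb, hE⟩
  -- p₀ ∈ X
  have hroot_mem : ∀ x : V, Relation.ReflTransGen E p₀ x → x ∈ X → p₀ ∈ X := by
    intro x h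
    induction h with
    | refl => exact id
    | tail h1 h2 ih => intro hx; exact ih (hstep h2 hx)
  obtain ⟨x0, hx0⟩ := hX
  have hp₀ : p₀ ∈ X := hroot_mem x0 (hroot x0) hx0
  -- reachability in the induced subgraph
  have hreach : ∀ x : V, Relation.ReflTransGen E p₀ x → x ∈ X →
      Relation.ReflTransGen (fun a b => a ∈ X ∧ b ∈ X ∧ E a b) p₀ x := by
    intro x h
    induction h with
    | refl => intro _; exact .refl
    | @tail b c h1 h2 ih =>
      intro hc
      have hb := hstep h2 hc
      exact (ih hb).tail ⟨hb, hc, h2⟩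
  refine ⟨hp₀, fun x hx => hreach x (hroot x) hx, ?_⟩
  -- the counting part
  set edges : Finset (V × V) := Finset.univ.filter (fun e => E e.1 e.2) with hedges
  have hec : edges.card = Fintype.card V - 1 := by
    rw [← hcard, Fintype.card_subtype]
  -- every vertex other than p₀ is the target of an edge
  have himg : (Finset.univ \ {p₀} : Finset V) ⊆ edges.image Prod.snd := by
    intro q hq
    simp only [Finset.mem_sdiff, Finset.mem_singleton] at hq
    rcases (hroot q).cases_tail with h | ⟨b, _, hbq⟩
    · exact absurd h hq.2
    · exact Finset.mem_image.mpr ⟨(b, q), by simp [hedges, hbq], rfl⟩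
  have hcard' : (Finset.univ \ {p₀} : Finset V).card = Fintype.card V - 1 := by
    rw [Finset.card_sdiff_of_subset (Finset.subset_univ _), Finset.card_singleton, Finset.card_univ]
  have himgcard : (edges.image Prod.snd).card = edges.card := by
    have h1 : (edges.image Prod.snd).card ≤ edges.card := Finset.card_image_le
    have h2 : edges.card ≤ (edges.image Prod.snd).card := by
      rw [hec, ← hcard']
      exact Finset.card_le_card himg
    omega
  have himg_eq : edges.image Prod.snd = Finset.univ \ {p₀} :=
    (Finset.eq_of_subset_of_card_le himg (by rw [himgcard, hec, hcard'])).symm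
  have hinj : Set.InjOn Prod.snd (edges : Set (V × V)) :=
    Finset.card_image_iff.mp himgcard
  -- induced edges
  set iedges : Finset (V × V) :=
      Finset.univ.filter (fun e => e.1 ∈ X ∧ e.2 ∈ X ∧ E e.1 e.2) with hiedges
  have hsub : iedges ⊆ edges := by
    intro e he
    simp only [hiedges, hedges, Finset.mem_filter, Finset.mem_univ, true_and] at he ⊢
    exact he.2.2
  have himg2 : iedges.image Prod.snd = X.toFinset \ {p₀} := by
    ext q
    simp only [Finset.mem_image, Finset.mem_sdiff, Set.mem_toFinset, Finset.mem_singleton]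
    constructor
    · rintro ⟨e, he, rfl⟩
      have he' : e ∈ edges := hsub he
      have : e.2 ∈ edges.image Prod.snd := Finset.mem_image_of_mem _ he'
      rw [himg_eq] at this
      simp only [Finset.mem_sdiff, Finset.mem_univ, true_and, Finset.mem_singleton] at this
      simp only [hiedges, Finset.mem_filter, Finset.mem_univ, true_and] at he
      exact ⟨he.2.1, this⟩
    · rintro ⟨hq, hq'⟩
      have : q ∈ edges.image Prod.snd := by
        rw [himg_eq]; simp [hq']
      obtain ⟨e, he, rfl⟩ := Finset.mem_image.mp this
      simp only [hedges, Finset.mem_filter, Finset.mem_univ, true_and] at he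
      refine ⟨e, ?_, rfl⟩
      simp only [hiedges, Finset.mem_filter, Finset.mem_univ, true_and]
      exact ⟨hstep he hq, hq, he⟩
  have hicard : iedges.card = (X.toFinset \ {p₀}).card := by
    rw [← himg2]
    exact (Finset.card_image_of_injOn (hinj.mono (by exact_mod_cast hsub))).symm
  have hfin : Fintype.card {e : V × V // e.1 ∈ X ∧ e.2 ∈ X ∧ E e.1 e.2} = iedges.card := by
    rw [Fintype.card_subtype]
  rw [hfin, hicard, Finset.card_sdiff_of_subset (by simp [hp₀]), Finset.card_singleton,
    Set.toFinset_card]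
end

section
/- Let V be a type and x, y, z : V be pairwise distinct. Let E : V → V → Prop be defined by E a b ↔ (a = y ∧ b = z) ∨ (a = z ∧ b = y), and let X = {x} and Y = {y, z}. Then (X, Y) is a dicut of the graph on nodes {x, y, z}: X and Y partition {x, y, z}, both are nonempty, and there is no edge (b, a) with b ∈ Y and a ∈ X; yet the subgraph induced by X has empty edge relation, so there do not exist distinct nodes p₀, p₁ ∈ X with E' p₀ p₁ and E' p₁ p₀ (where E' is the induced edge relation). Hence the dicut reduction of a PAIR graph need not be a PAIR graph. -/
/-- The system PAIR is not dicut-closed: for the graph on `{x, y, z}` whose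
only edges are `(y, z)` and `(z, y)`, the pair `({x}, {y, z})` is a dicut, yet
the subgraph induced by `{x}` has no pair of distinct mutually-linked nodes. -/
theorem pair_not_dicut_closed {V : Type*} (x y z : V)
    (hxy : x ≠ y) (hyz : y ≠ z) (hxz : x ≠ z)
    (E : V → V → Prop)
    (hE : ∀ a b, E a b ↔ ((a = y ∧ b = z) ∨ (a = z ∧ b = y)))
    (X Y : Set V) (hX : X = {x}) (hY : Y = ({y, z} : Set V)) :
    X ∪ Y = ({x, y, z} : Set V) ∧
    X ∩ Y = ∅ ∧
    X.Nonempty ∧ Y.Nonempty ∧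
    (¬ ∃ b ∈ Y, ∃ a ∈ X, E b a) ∧
    ¬ ∃ p₀ ∈ X, ∃ p₁ ∈ X, p₀ ≠ p₁ ∧
      (p₀ ∈ X ∧ p₁ ∈ X ∧ E p₀ p₁) ∧ (p₁ ∈ X ∧ p₀ ∈ X ∧ E p₁ p₀) := by
  subst hX hY
  refine ⟨?_, ?_, ⟨x, rfl⟩, ⟨y, Or.inl rfl⟩, ?_, ?_⟩
  · ext v
    simp only [Set.mem_union, Set.mem_singleton_iff, Set.mem_insert_iff]
  · ext v
    simp only [Set.mem_inter_iff, Set.mem_singleton_iff, Set.mem_insert_iff,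
      Set.mem_empty_iff_false, iff_false]
    rintro ⟨rfl, rfl | rfl⟩ <;> [exact hxy rfl; exact hxz rfl]
  · rintro ⟨b, hb, a, ha, hba⟩
    rw [Set.mem_singleton_iff] at ha
    subst ha
    rcases (hE b a).1 hba with ⟨_, h⟩ | ⟨_, h⟩
    · exact hxz h
    · exact hxy h
  · rintro ⟨p₀, h₀, p₁, h₁, hne, _⟩
    rw [Set.mem_singleton_iff] at h₀ h₁
    exact hne (h₀.trans h₁.symm)
end
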